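/- Let n ≥ 5 be odd and work in ℝ^n with the type D_n root system. Let S = S⁺ ∪ S⁻ where S⁺ = {ε_{2i-1} + ε_{2i} : 1 ≤ i ≤ (n−3)/2} ∪ {ε_{n-2} + ε_n, ε_{n-2} − ε_n} and S⁻ = {ε_{n-1} − ε_1} ∪ {ε_{n-i-1} − ε_i : 2 ≤ i ≤ (n−3)/2}. Let h_Λ be the subspace of the Cartan subalgebra spanned by the coroots α^∨ for α ∈ π' = π \ {α_{n-1}, α_n} together with H^{-1}(ε_n) (the element of h corresponding to ε_n). Then the restrictions of the elements of S to h_Λ form a basis of h_Λ^*; in particular |S| = n − 1 = dim h_Λ. -/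
import Mathlib


open scoped RealInnerProductSpace

/-- 1-based orthonormal basis vectors `ε_k` of `ℝ^n` (zero out of range). -/
noncomputable def eps (n k : ℕ) : EuclideanSpace ℝ (Fin n) :=
  if h : 1 ≤ k ∧ k ≤ n then EuclideanSpace.single ⟨k - 1, by omega⟩ (1 : ℝ) else 0

/-- The restriction to the subspace `W` of the linear functional `⟪x, ·⟫`
(i.e. the restriction to `W` of a weight `x`, under the identification of
weights with vectors given by the form). -/
noncomputable def restrictedInner {n : ℕ} (x : EuclideanSpace ℝ (Fin n))
    (W : Submodule ℝ (EuclideanSpace ℝ (Fin n))) : Module.Dual ℝ W where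
  toFun w := ⟪x, (w : EuclideanSpace ℝ (Fin n))⟫
  map_add' a b := by simp [inner_add_right]
  map_smul' c a := by simp [inner_smul_right]

/-- The coroots of type `D_n` : `α_k^∨ = ε_k - ε_{k+1}` for `k < n` and
`α_n^∨ = ε_{n-1} + ε_n`. -/
noncomputable def corootD (n k : ℕ) : EuclideanSpace ℝ (Fin n) :=
  if k = n then eps n (n - 1) + eps n n else eps n k - eps n (k + 1)

/-- auxiliary -/
noncomputable def sVec (n i : ℕ) : EuclideanSpace ℝ (Fin n) :=
  if i + 2 ≤ n / 2 then eps n (2*i+1) + eps n (2*i+2)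
  else if i + 1 = n / 2 then eps n (n-2) + eps n n
  else if i = n / 2 then eps n (n-2) - eps n n
  else if i = n / 2 + 1 then eps n (n-1) - eps n 1
  else eps n (n - (i - n/2) - 1) - eps n (i - n/2)

noncomputable def uVec (n : ℕ) : EuclideanSpace ℝ (Fin n) :=
  ∑ k ∈ Finset.range (n-1), eps n (k+1)

def mu (m k : ℕ) : ℕ :=
  if k = 2*m+1 ∨ k = 2*m-1 then 0
  else if k = 2*m then 1
  else if k ≤ m then (if k % 2 = 0 then 2*k-1 else 2*k)
  else (if (2*m-k) % 2 = 0 then 2*(2*m-k) else 2*(2*m-k)-1)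

noncomputable def cVec (n k : ℕ) : EuclideanSpace ℝ (Fin n) :=
  if k = 0 then eps n 1 else if k ≤ n - 2 then eps n k - eps n (k+1) else eps n n

lemma epsc (n a b : ℕ) (h : a = b) : eps n a = eps n b := by rw [h]

lemma inner_eps (n a b : ℕ) (ha1 : 1 ≤ a) (han : a ≤ n) (hb1 : 1 ≤ b) (hbn : b ≤ n) :
    ⟪eps n a, eps n b⟫ = if a = b then 1 else 0 := by
  rw [eps, eps, dif_pos ⟨ha1, han⟩, dif_pos ⟨hb1, hbn⟩, EuclideanSpace.inner_single_left,
    EuclideanSpace.single_apply]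
  have h : ((⟨a - 1, by omega⟩ : Fin n) = ⟨b - 1, by omega⟩) ↔ a = b := by
    rw [Fin.mk.injEq]; omega
  by_cases hab : a = b
  · rw [if_pos (h.mpr hab), if_pos hab]; simp
  · rw [if_neg (fun hc => hab (h.mp hc)), if_neg hab]; simp

lemma single_eq_eps (n : ℕ) (j : Fin n) : EuclideanSpace.single j (1:ℝ) = eps n (j.val+1) := by
  rw [eps, dif_pos ⟨by omega, by omega⟩]
  congr 1

noncomputable def innerDualMap {n : ℕ} (W : Submodule ℝ (EuclideanSpace ℝ (Fin n))) :
    EuclideanSpace ℝ (Fin n) →ₗ[ℝ] Module.Dual ℝ W where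
  toFun x := restrictedInner x W
  map_add' x y := by ext w; simp [restrictedInner, inner_add_left]
  map_smul' c x := by ext w; simp [restrictedInner, real_inner_smul_left, Finset.mul_sum, mul_assoc]

lemma sum_pairs (n : ℕ) : ∀ M, ∑ i ∈ Finset.range M, (eps n (2*i+1) + eps n (2*i+2))
    = ∑ k ∈ Finset.range (2*M), eps n (k+1)
  | 0 => by simp
  | (M+1) => by
    rw [Finset.sum_range_succ, sum_pairs n M, show 2*(M+1) = (2*M+1)+1 by ring,
      Finset.sum_range_succ, Finset.sum_range_succ]
    rw [show 2*M+1+1 = 2*M+2 by ring]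
    abel

set_option maxHeartbeats 1000000 in
/-- Type `D_n`, `n ≥ 5` odd. With
`S⁺ = {ε_{2i-1} + ε_{2i} : 1 ≤ i ≤ (n-3)/2} ∪ {ε_{n-2} + ε_n, ε_{n-2} - ε_n}`,
`S⁻ = {ε_{n-1} - ε_1} ∪ {ε_{n-i-1} - ε_i : 2 ≤ i ≤ (n-3)/2}`, and `h_Λ` the span
of the coroots `α^∨`, `α ∈ π' = π \ {α_{n-1}, α_n}`, together with `H⁻¹(ε_n)`
(which pairs with a weight `λ` as `(λ, ε_n)`), the restrictions to `h_Λ` of the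
elements of `S = S⁺ ∪ S⁻` form a basis of `h_Λ^*`; in particular
`|S| = n - 1 = dim h_Λ`. -/
theorem statement_11 (n : ℕ) (hn : 5 ≤ n) (hnodd : Odd n)
    (S : Set (EuclideanSpace ℝ (Fin n)))
    (hS : S = {v | ∃ i, 1 ≤ i ∧ i ≤ (n - 3) / 2 ∧ v = eps n (2 * i - 1) + eps n (2 * i)}
        ∪ {eps n (n - 2) + eps n n, eps n (n - 2) - eps n n, eps n (n - 1) - eps n 1}
        ∪ {v | ∃ i, 2 ≤ i ∧ i ≤ (n - 3) / 2 ∧ v = eps n (n - i - 1) - eps n i})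
    (hΛ : Submodule ℝ (EuclideanSpace ℝ (Fin n)))
    (hhΛ : hΛ = Submodule.span ℝ
        ({v | ∃ k, 1 ≤ k ∧ k ≤ n - 2 ∧ v = corootD n k} ∪ {eps n n})) :
    S.ncard = n - 1 ∧ Module.finrank ℝ hΛ = n - 1 ∧
    LinearIndependent ℝ (fun x : S => restrictedInner (x : EuclideanSpace ℝ (Fin n)) hΛ) ∧
    Submodule.span ℝ
      (Set.range (fun x : S => restrictedInner (x : EuclideanSpace ℝ (Fin n)) hΛ)) = ⊤ := by
  obtain ⟨m, hm⟩ := hnodd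
  have hm2 : 2 ≤ m := by omega
  have hn2 : n / 2 = m := by omega
  set v : Fin (n-1) → EuclideanSpace ℝ (Fin n) := fun i => sVec n i.val with hv
  set g : (Fin (n-1)) ⊕ Unit → EuclideanSpace ℝ (Fin n) :=
    Sum.elim v (fun _ => uVec n) with hg
  set T := Submodule.span ℝ (Set.range g) with hT
  have hmemS : ∀ i : ℕ, i < n - 1 → sVec n i ∈ T :=
    fun i hi => Submodule.subset_span ⟨Sum.inl ⟨i, hi⟩, rfl⟩
  have hmemU : uVec n ∈ T := Submodule.subset_span ⟨Sum.inr (), rfl⟩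
  have hA : ∀ i : ℕ, 1 ≤ i → i ≤ m - 1 → eps n (2*i-1) + eps n (2*i) ∈ T := by
    intro i h1 h2
    have h := hmemS (i-1) (by omega)
    simp only [sVec, hn2] at h
    rw [if_pos (by omega : i - 1 + 2 ≤ m)] at h
    rwa [epsc n (2*(i-1)+1) (2*i-1) (by omega), epsc n (2*(i-1)+2) (2*i) (by omega)] at h
  have hB : eps n (n-2) + eps n n ∈ T := by
    have h := hmemS (m-1) (by omega)
    simp only [sVec, hn2] at h
    rwa [if_neg (by omega), if_pos (by omega)] at h
  have hC : eps n (n-2) - eps n n ∈ T := by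
    have h := hmemS m (by omega)
    simp only [sVec, hn2] at h
    rwa [if_neg (by omega), if_neg (by omega), if_pos trivial] at h
  have hD : eps n (n-1) - eps n 1 ∈ T := by
    have h := hmemS (m+1) (by omega)
    simp only [sVec, hn2] at h
    rwa [if_neg (by omega), if_neg (by omega), if_neg (by omega), if_pos trivial] at h
  have hE : ∀ i : ℕ, 2 ≤ i → i ≤ m - 1 → eps n (n-i-1) - eps n i ∈ T := by
    intro i h1 h2
    have h := hmemS (m+i) (by omega)
    simp only [sVec, hn2] at h
    rw [if_neg (by omega), if_neg (by omega), if_neg (by omega), if_neg (by omega)] at h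
    rwa [show m + i - m = i from by omega] at h
  have h_top1 : eps n n ∈ T := by
    have heq : eps n n = (2⁻¹ : ℝ) • ((eps n (n-2) + eps n n) - (eps n (n-2) - eps n n)) := by
      module
    rw [heq]; exact Submodule.smul_mem _ _ (Submodule.sub_mem _ hB hC)
  have h_n2' : eps n (n-2) ∈ T := by
    have heq : eps n (n-2) = (2⁻¹ : ℝ) • ((eps n (n-2) + eps n n) + (eps n (n-2) - eps n n)) := by
      module
    rw [heq]; exact Submodule.smul_mem _ _ (Submodule.add_mem _ hB hC)
  have h_sumA : (∑ k ∈ Finset.range (2*(m-1)), eps n (k+1)) ∈ T := by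
    rw [← sum_pairs]
    refine Submodule.sum_mem _ (fun i hi => ?_)
    rw [Finset.mem_range] at hi
    have h := hA (i+1) (by omega) (by omega)
    rwa [epsc n (2*(i+1)-1) (2*i+1) (by omega), epsc n (2*(i+1)) (2*i+2) (by omega)] at h
  have hu_split : uVec n = (∑ k ∈ Finset.range (2*(m-1)), eps n (k+1))
      + eps n (n-2) + eps n (n-1) := by
    rw [uVec, show n - 1 = (2*(m-1)+1)+1 from by omega, Finset.sum_range_succ,
      Finset.sum_range_succ]
    rw [epsc n (2*(m-1)+1+1) (n-1) (by omega), epsc n (2*(m-1)+1) (n-2) (by omega)]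
  have h_n1 : eps n (n-1) ∈ T := by
    have heq : eps n (n-1) = uVec n - (∑ k ∈ Finset.range (2*(m-1)), eps n (k+1))
        - eps n (n-2) := by rw [hu_split]; abel
    rw [heq]; exact Submodule.sub_mem _ (Submodule.sub_mem _ hmemU h_sumA) h_n2'
  have h_1 : eps n 1 ∈ T := by
    have heq : eps n 1 = eps n (n-1) - (eps n (n-1) - eps n 1) := by abel
    rw [heq]; exact Submodule.sub_mem _ h_n1 hD
  have key : ∀ N k, 1 ≤ k → k ≤ n → mu m k = N → eps n k ∈ T := by
    intro N
    induction N using Nat.strong_induction_on with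
    | _ N ih =>
    intro k hk1 hkn hN
    subst hN
    by_cases hc1 : k = 2*m+1
    · rw [epsc n k n (by omega)]; exact h_top1
    by_cases hc2 : k = 2*m-1
    · rw [epsc n k (n-2) (by omega)]; exact h_n2'
    by_cases hc3 : k = 2*m
    · rw [epsc n k (n-1) (by omega)]; exact h_n1
    by_cases hc4 : k = 1
    · rw [hc4]; exact h_1
    have hk2 : 2 ≤ k := by omega
    have hk2m : k ≤ 2*m-2 := by omega
    by_cases hkm : k ≤ m
    · by_cases hpar : k % 2 = 0
      · have hprev : eps n (k-1) ∈ T :=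
          ih (mu m (k-1)) (by unfold mu; split_ifs <;> omega) (k-1) (by omega) (by omega) rfl
        have hAk := hA (k/2) (by omega) (by omega)
        rw [epsc n (2*(k/2)-1) (k-1) (by omega), epsc n (2*(k/2)) k (by omega)] at hAk
        have heq : eps n k = (eps n (k-1) + eps n k) - eps n (k-1) := by abel
        rw [heq]; exact Submodule.sub_mem _ hAk hprev
      · by_cases hkmeq : k = m
        · have hprev : eps n (m+1) ∈ T :=
            ih (mu m (m+1)) (by unfold mu; split_ifs <;> omega) (m+1) (by omega) (by omega) rfl
          have hAk := hA ((m+1)/2) (by omega) (by omega)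
          rw [epsc n (2*((m+1)/2)-1) k (by omega), epsc n (2*((m+1)/2)) (m+1) (by omega)] at hAk
          have heq : eps n k = (eps n k + eps n (m+1)) - eps n (m+1) := by abel
          rw [heq]; exact Submodule.sub_mem _ hAk hprev
        · have hprev : eps n (2*m-k) ∈ T :=
            ih (mu m (2*m-k)) (by unfold mu; split_ifs <;> omega) (2*m-k) (by omega) (by omega) rfl
          have hEk := hE k (by omega) (by omega)
          rw [epsc n (n-k-1) (2*m-k) (by omega)] at hEk
          have heq : eps n k = eps n (2*m-k) - (eps n (2*m-k) - eps n k) := by abel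
          rw [heq]; exact Submodule.sub_mem _ hprev hEk
    · by_cases hpar : (2*m-k) % 2 = 0
      · have hprev : eps n (2*m-k) ∈ T :=
          ih (mu m (2*m-k)) (by unfold mu; split_ifs <;> omega) (2*m-k) (by omega) (by omega) rfl
        have hEk := hE (2*m-k) (by omega) (by omega)
        rw [epsc n (n-(2*m-k)-1) k (by omega)] at hEk
        have heq : eps n k = eps n (2*m-k) + (eps n k - eps n (2*m-k)) := by abel
        rw [heq]; exact Submodule.add_mem _ hprev hEk
      · have hprev : eps n (k+1) ∈ T :=
          ih (mu m (k+1)) (by unfold mu; split_ifs <;> omega) (k+1) (by omega) (by omega) rfl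
        have hAk := hA ((k+1)/2) (by omega) (by omega)
        rw [epsc n (2*((k+1)/2)-1) k (by omega), epsc n (2*((k+1)/2)) (k+1) (by omega)] at hAk
        have heq : eps n k = (eps n k + eps n (k+1)) - eps n (k+1) := by abel
        rw [heq]; exact Submodule.sub_mem _ hAk hprev
  have hspanT : T = ⊤ := by
    rw [eq_top_iff, ← (EuclideanSpace.basisFun (Fin n) ℝ).toBasis.span_eq, Submodule.span_le]
    rintro x ⟨j, rfl⟩
    have hb : (EuclideanSpace.basisFun (Fin n) ℝ).toBasis j = eps n (j.val+1) := by
      rw [OrthonormalBasis.coe_toBasis, EuclideanSpace.basisFun_apply, single_eq_eps]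
    rw [hb]
    exact key _ (j.val+1) (by omega) (by omega) rfl
  have hcard : Fintype.card ((Fin (n-1)) ⊕ Unit) = Module.finrank ℝ (EuclideanSpace ℝ (Fin n)) := by
    rw [finrank_euclideanSpace_fin]
    simp only [Fintype.card_sum, Fintype.card_fin, Fintype.card_unit]
    omega
  have hgli : LinearIndependent ℝ g :=
    linearIndependent_of_top_le_span_of_card_eq_finrank (by rw [← hT, hspanT]) hcard
  rw [linearIndependent_sum] at hgli
  obtain ⟨hvli', _, hdisj⟩ := hgli
  have hvli : LinearIndependent ℝ v := by rwa [Sum.elim_comp_inl] at hvli'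
  have hdisj' : Disjoint (Submodule.span ℝ (Set.range v)) (Submodule.span ℝ {uVec n}) := by
    rwa [Sum.elim_comp_inl, Sum.elim_comp_inr, Set.range_const] at hdisj
  have hvinj : Function.Injective v := hvli.injective
  have hrange : Set.range v = S := by
    rw [hS]
    ext x
    constructor
    · rintro ⟨⟨i, hi⟩, rfl⟩
      have hx : v ⟨i, hi⟩ = sVec n i := rfl
      rw [hx]
      by_cases c1 : i + 2 ≤ m
      · refine Or.inl (Or.inl ⟨i+1, by omega, by omega, ?_⟩)
        simp only [sVec, hn2]
        rw [if_pos c1, epsc n (2*(i+1)-1) (2*i+1) (by omega), epsc n (2*(i+1)) (2*i+2) (by omega)]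
      · by_cases c2 : i + 1 = m
        · refine Or.inl (Or.inr ?_)
          simp only [Set.mem_insert_iff, Set.mem_singleton_iff]
          left
          simp only [sVec, hn2]
          rw [if_neg c1, if_pos c2]
        · by_cases c3 : i = m
          · refine Or.inl (Or.inr ?_)
            simp only [Set.mem_insert_iff, Set.mem_singleton_iff]
            right; left
            simp only [sVec, hn2]
            rw [if_neg c1, if_neg c2, if_pos c3]
          · by_cases c4 : i = m + 1
            · refine Or.inl (Or.inr ?_)
              simp only [Set.mem_insert_iff, Set.mem_singleton_iff]
              right; right
              simp only [sVec, hn2]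
              rw [if_neg c1, if_neg c2, if_neg c3, if_pos c4]
            · refine Or.inr ⟨i - m, by omega, by omega, ?_⟩
              simp only [sVec, hn2]
              rw [if_neg c1, if_neg c2, if_neg c3, if_neg c4]
    · rintro ((⟨i, h1, h2, rfl⟩ | hx) | ⟨i, h1, h2, rfl⟩)
      · refine ⟨⟨i-1, by omega⟩, ?_⟩
        show sVec n (i-1) = _
        simp only [sVec, hn2]
        rw [if_pos (by omega : i - 1 + 2 ≤ m)]
        rw [epsc n (2*(i-1)+1) (2*i-1) (by omega), epsc n (2*(i-1)+2) (2*i) (by omega)]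
      · simp only [Set.mem_insert_iff, Set.mem_singleton_iff] at hx
        rcases hx with h | h | h
        · refine ⟨⟨m-1, by omega⟩, ?_⟩
          show sVec n (m-1) = _
          simp only [sVec, hn2]
          rw [if_neg (by omega), if_pos (by omega), h]
        · refine ⟨⟨m, by omega⟩, ?_⟩
          show sVec n m = _
          simp only [sVec, hn2]
          rw [if_neg (by omega), if_neg (by omega), if_pos trivial, h]
        · refine ⟨⟨m+1, by omega⟩, ?_⟩
          show sVec n (m+1) = _
          simp only [sVec, hn2]
          rw [if_neg (by omega), if_neg (by omega), if_neg (by omega), if_pos trivial, h]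
      · refine ⟨⟨m+i, by omega⟩, ?_⟩
        show sVec n (m+i) = _
        simp only [sVec, hn2]
        rw [if_neg (by omega), if_neg (by omega), if_neg (by omega), if_neg (by omega),
          show m + i - m = i from by omega]
  have hncard : S.ncard = n - 1 := by
    rw [← hrange, ← Set.image_univ, Set.ncard_image_of_injective _ hvinj, Set.ncard_univ,
      Nat.card_eq_fintype_card, Fintype.card_fin]
  -- finrank hΛ
  set c : Fin n → EuclideanSpace ℝ (Fin n) := fun k => cVec n k.val with hcdef
  have hcspan : ∀ k : ℕ, 1 ≤ k → k ≤ n → eps n k ∈ Submodule.span ℝ (Set.range c) := by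
    intro k
    induction k with
    | zero => omega
    | succ k ihk =>
      intro h1 h2
      by_cases hk0 : k = 0
      · subst hk0
        refine Submodule.subset_span ⟨⟨0, by omega⟩, ?_⟩
        show cVec n 0 = eps n 1
        rw [cVec, if_pos rfl]
      · by_cases hkn : k + 1 = n
        · refine Submodule.subset_span ⟨⟨n-1, by omega⟩, ?_⟩
          show cVec n (n-1) = eps n (k+1)
          rw [cVec, if_neg (by omega), if_neg (by omega), epsc n n (k+1) (by omega)]
        · have hmem : eps n k - eps n (k+1) ∈ Submodule.span ℝ (Set.range c) := by
            refine Submodule.subset_span ⟨⟨k, by omega⟩, ?_⟩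
            show cVec n k = _
            rw [cVec, if_neg hk0, if_pos (by omega)]
          have heq : eps n (k+1) = eps n k - (eps n k - eps n (k+1)) := by abel
          rw [heq]
          exact Submodule.sub_mem _ (ihk (by omega) (by omega)) hmem
  have hcspan' : Submodule.span ℝ (Set.range c) = ⊤ := by
    rw [eq_top_iff, ← (EuclideanSpace.basisFun (Fin n) ℝ).toBasis.span_eq, Submodule.span_le]
    rintro x ⟨j, rfl⟩
    have hb : (EuclideanSpace.basisFun (Fin n) ℝ).toBasis j = eps n (j.val+1) := by
      rw [OrthonormalBasis.coe_toBasis, EuclideanSpace.basisFun_apply, single_eq_eps]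
    rw [hb]
    exact hcspan (j.val+1) (by omega) (by omega)
  have hcli : LinearIndependent ℝ c :=
    linearIndependent_of_top_le_span_of_card_eq_finrank (by rw [hcspan']) (by
      rw [finrank_euclideanSpace_fin, Fintype.card_fin])
  have hsubli : LinearIndependent ℝ (fun k : Fin (n-1) => cVec n (k.val+1)) := by
    have := hcli.comp (fun k : Fin (n-1) => (⟨k.val+1, by omega⟩ : Fin n))
      (fun a b hab => by
        simp only [Fin.mk.injEq] at hab
        exact Fin.ext (by omega))
    exact this
  have hGset : {v : EuclideanSpace ℝ (Fin n) | ∃ k, 1 ≤ k ∧ k ≤ n - 2 ∧ v = corootD n k} ∪ {eps n n}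
      = Set.range (fun k : Fin (n-1) => cVec n (k.val+1)) := by
    ext x
    constructor
    · rintro (⟨k, h1, h2, rfl⟩ | hx)
      · refine ⟨⟨k-1, by omega⟩, ?_⟩
        show cVec n (k-1+1) = corootD n k
        rw [corootD, if_neg (by omega), cVec, show k-1+1 = k from by omega,
          if_neg (by omega), if_pos h2]
      · rw [Set.mem_singleton_iff] at hx
        refine ⟨⟨n-2, by omega⟩, ?_⟩
        rw [hx]
        show cVec n (n-2+1) = eps n n
        rw [cVec, if_neg (by omega), if_neg (by omega)]
    · rintro ⟨⟨k, hk⟩, rfl⟩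
      by_cases h : k + 1 ≤ n - 2
      · refine Or.inl ⟨k+1, by omega, h, ?_⟩
        show cVec n (k+1) = corootD n (k+1)
        rw [corootD, if_neg (by omega), cVec, if_neg (by omega), if_pos h]
      · refine Or.inr ?_
        show cVec n (k+1) ∈ ({eps n n} : Set _)
        rw [Set.mem_singleton_iff, cVec, if_neg (by omega), if_neg (by omega)]
  have hfr : Module.finrank ℝ hΛ = n - 1 := by
    rw [hhΛ, hGset, finrank_span_eq_card hsubli, Fintype.card_fin]
  clear hmemS hmemU hA hB hC hD hE h_top1 h_n2' h_sumA hu_split h_n1 h_1 key hspanT hcard hvli' hdisj hcspan hcspan' hcli hsubli hGset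
  -- orthogonality of uVec
  have huinner : ∀ a : ℕ, 1 ≤ a → a ≤ n → ⟪uVec n, eps n a⟫ = if a ≤ n-1 then 1 else 0 := by
    intro a h1 h2
    rw [uVec, sum_inner]
    rw [Finset.sum_congr rfl (fun k hk => inner_eps n (k+1) a (by omega)
      (by rw [Finset.mem_range] at hk; omega) h1 h2)]
    have hc : ∀ k ∈ Finset.range (n-1), (if k+1 = a then (1:ℝ) else 0)
        = if k = a-1 then 1 else 0 := by
      intro k _
      by_cases h' : k + 1 = a
      · rw [if_pos h', if_pos (by omega)]
      · rw [if_neg h', if_neg (by omega)]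
    rw [Finset.sum_congr rfl hc, Finset.sum_ite_eq' (Finset.range (n-1)) (a-1) (fun _ => (1:ℝ))]
    by_cases h : a ≤ n - 1
    · rw [if_pos (Finset.mem_range.mpr (by omega)), if_pos h]
    · rw [if_neg (by rw [Finset.mem_range]; omega), if_neg h]
  have hu_orth : uVec n ∈ hΛᗮ := by
    rw [Submodule.mem_orthogonal]
    intro w hw
    rw [hhΛ] at hw
    induction hw using Submodule.span_induction with
    | mem x hx =>
      rcases hx with ⟨k, h1, h2, rfl⟩ | hx
      · rw [real_inner_comm, corootD, if_neg (by omega), inner_sub_right,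
          huinner k h1 (by omega), huinner (k+1) (by omega) (by omega),
          if_pos (by omega), if_pos (by omega), sub_self]
      · rw [Set.mem_singleton_iff] at hx
        rw [hx, real_inner_comm, huinner n (by omega) le_rfl, if_neg (by omega)]
    | zero => simp
    | add x y hx hy ihx ihy => rw [inner_add_left, ihx, ihy, add_zero]
    | smul c x hx ihx => rw [real_inner_smul_left, ihx, mul_zero]
  have hu_ne : uVec n ≠ 0 := by
    intro h0
    have h1 := huinner 1 le_rfl (by omega)
    rw [h0, inner_zero_left, if_pos (by omega)] at h1
    exact one_ne_zero h1.symm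
  have horth_eq : hΛᗮ = Submodule.span ℝ {uVec n} := by
    refine (Submodule.eq_of_le_of_finrank_le
      (Submodule.span_le.mpr (by rintro x rfl; exact hu_orth)) ?_).symm
    rw [finrank_span_singleton hu_ne]
    have hsum := Submodule.finrank_add_finrank_orthogonal hΛ
    rw [hfr, finrank_euclideanSpace_fin] at hsum
    omega
  -- the dual family
  set φ : Fin (n-1) → Module.Dual ℝ hΛ := fun i => innerDualMap hΛ (v i) with hφdef
  have hφli : LinearIndependent ℝ φ := by
    rw [Fintype.linearIndependent_iff]
    intro cco hc i
    have hx : innerDualMap hΛ (∑ j, cco j • v j) = 0 := by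
      rw [map_sum]
      simp only [map_smul]
      exact hc
    have hxo : (∑ j, cco j • v j) ∈ hΛᗮ := by
      rw [Submodule.mem_orthogonal]
      intro u hu
      have := DFunLike.congr_fun hx (⟨u, hu⟩ : hΛ)
      rw [real_inner_comm]
      exact this
    rw [horth_eq] at hxo
    have h0 : (∑ j, cco j • v j) = 0 := by
      have hmem2 : (∑ j, cco j • v j) ∈ Submodule.span ℝ (Set.range v)
          ⊓ Submodule.span ℝ {uVec n} :=
        ⟨Submodule.sum_mem _ (fun j _ => Submodule.smul_mem _ _
          (Submodule.subset_span ⟨j, rfl⟩)), hxo⟩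
      rw [hdisj'.eq_bot] at hmem2
      exact hmem2
    exact Fintype.linearIndependent_iff.mp hvli cco h0 i
  have hcard' : Fintype.card (Fin (n-1)) = Module.finrank ℝ (Module.Dual ℝ hΛ) := by
    rw [Subspace.dual_finrank_eq, hfr, Fintype.card_fin]
  haveI : Nonempty (Fin (n-1)) := ⟨⟨0, by omega⟩⟩
  have hφspan : Submodule.span ℝ (Set.range φ) = ⊤ := by
    have hb := (basisOfLinearIndependentOfCardEqFinrank hφli hcard').span_eq
    rwa [coe_basisOfLinearIndependentOfCardEqFinrank] at hb
  -- transfer to S-indexed family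
  set e : Fin (n-1) ≃ S := (Equiv.ofInjective v hvinj).trans (Equiv.setCongr hrange) with he
  have hcomp : (fun x : S => restrictedInner (x : EuclideanSpace ℝ (Fin n)) hΛ) ∘ e = φ := by
    funext i
    have hval : ((e i : S) : EuclideanSpace ℝ (Fin n)) = v i := by
      rw [he]
      simp [Equiv.trans_apply, Equiv.setCongr_apply, Equiv.ofInjective_apply]
    show restrictedInner ((e i : S) : EuclideanSpace ℝ (Fin n)) hΛ = innerDualMap hΛ (v i)
    rw [hval]
    rfl
  refine ⟨hncard, hfr, ?_, ?_⟩
  · exact (linearIndependent_equiv e).mp (by rw [hcomp]; exact hφli)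
  · rw [← e.surjective.range_comp (fun x : S => restrictedInner
      (x : EuclideanSpace ℝ (Fin n)) hΛ), hcomp]
    exact hφspan
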